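/- arXiv:0912.4827 — 2 statements merged into one kernel-verified Lean document; each statement's English description precedes it below -/
import Mathlib

section
/- Let (X,S) be a non-degenerate, involutive and braided set-theoretical solution on a finite set X, and let G be its structure group. Then G is torsion-free: for every a ∈ G and every integer n > 0, aⁿ = 1 implies a = 1. -/
/-!
The map `x ↦ (e_x, g_x)` into `ℤ^X ⋊ Sym(X)` respects the defining relations (the first
coordinate by involutivity, the second by the braid relation), and on the structure monoid `M`
its coordinate part is a bijection onto `ℕ^X` turning left divisibility into the componentwise
order. So finite families in `M` have right lcms, `M` is right Ore and embeds in `G` as its group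
of right fractions, and the sum of coordinates is a degree `G → ℤ` vanishing on `M` only at `1`.

If `a ^ n = 1`, pick `b ∈ M` with every `a ^ i * b ∈ M` (`i < n`) and let `L` be their right lcm.
Left multiplication by `a` permutes the `a ^ i * b` cyclically, so `a * L ∈ M` is a common
multiple of them, hence `a * L = L * e` with `e ∈ M`. Since `deg a = 0`, `deg e = 0`, so `e = 1`
and `a = 1`.
-/

namespace YBE

/-- `(X,S)` is non-degenerate: all the maps `g_x = y ↦ S(x,y).1` and
`f_y = x ↦ S(x,y).2` are bijective. -/
def Nondegenerate {X : Type*} (S : X × X → X × X) : Prop :=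
  (∀ x : X, Function.Bijective fun y => (S (x, y)).1) ∧
  (∀ y : X, Function.Bijective fun x => (S (x, y)).2)

/-- `(X,S)` is involutive: `S ∘ S = id`. -/
def InvolutiveSol {X : Type*} (S : X × X → X × X) : Prop := S ∘ S = id

/-- `S¹² = S × id` on `X × X × X`. -/
def S12 {X : Type*} (S : X × X → X × X) : X × X × X → X × X × X :=
  fun p => ((S (p.1, p.2.1)).1, (S (p.1, p.2.1)).2, p.2.2)

/-- `S²³ = id × S` on `X × X × X`. -/
def S23 {X : Type*} (S : X × X → X × X) : X × X × X → X × X × X :=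
  fun p => (p.1, S (p.2.1, p.2.2))

/-- `(X,S)` is braided: `S¹² ∘ S²³ ∘ S¹² = S²³ ∘ S¹² ∘ S²³`. -/
def BraidedSol {X : Type*} (S : X × X → X × X) : Prop :=
  S12 S ∘ S23 S ∘ S12 S = S23 S ∘ S12 S ∘ S23 S

/-- The map `g_x : y ↦ S(x,y).1`. -/
def gmap {X : Type*} (S : X × X → X × X) (x : X) : X → X := fun y => (S (x, y)).1

/-- The map `f_y : x ↦ S(x,y).2`. -/
def fmap {X : Type*} (S : X × X → X × X) (y : X) : X → X := fun x => (S (x, y)).2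

/-- The inverse `g_x⁻¹` of the (bijective) map `g_x`. -/
noncomputable def ginv {X : Type*} [Nonempty X] (S : X × X → X × X) (x : X) : X → X :=
  Function.invFun (gmap S x)

/-- The inverse `f_y⁻¹` of the (bijective) map `f_y`. -/
noncomputable def finv {X : Type*} [Nonempty X] (S : X × X → X × X) (y : X) : X → X :=
  Function.invFun (fmap S y)

/-- The defining relations of the structure monoid: `x·y = t·z` whenever `S(x,y) = (t,z)`. -/
def ybRel {X : Type*} (S : X × X → X × X) : FreeMonoid X → FreeMonoid X → Prop :=
  fun a b => ∃ x y : X, a = FreeMonoid.of x * FreeMonoid.of y ∧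
    b = FreeMonoid.of (S (x, y)).1 * FreeMonoid.of (S (x, y)).2

/-- The structure monoid of `(X,S)`: the monoid presented by generating set `X` and
relations `x·y = t·z` for each `x,y,t,z` with `S(x,y) = (t,z)`. -/
abbrev StructureMonoid {X : Type*} (S : X × X → X × X) : Type _ :=
  (conGen (ybRel S)).Quotient

/-- The image in the structure monoid of a generator `x ∈ X`. -/
def smi {X : Type*} (S : X × X → X × X) (x : X) : StructureMonoid S :=
  (conGen (ybRel S)).mk' (FreeMonoid.of x)

/-- The defining relations of the structure group, as elements of the free group. -/
def ybGRels {X : Type*} (S : X × X → X × X) : Set (FreeGroup X) :=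
  {w | ∃ x y : X, w = FreeGroup.of x * FreeGroup.of y *
    (FreeGroup.of (S (x, y)).1 * FreeGroup.of (S (x, y)).2)⁻¹}

/-- The structure group of `(X,S)`: the group presented by generating set `X` and
relations `x·y = t·z` for each `x,y,t,z` with `S(x,y) = (t,z)`. -/
abbrev StructureGroup {X : Type*} (S : X × X → X × X) : Type _ :=
  PresentedGroup (ybGRels S)

/-- `a` left-divides `b`. -/
def LDvd {M : Type*} [Monoid M] (a b : M) : Prop := ∃ c, b = a * c

/-- `m` is a right lcm of the family `a`: each `a i` left-divides `m`, and `m`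
left-divides every common right multiple of the `a i`. -/
def IsRightLcm {M : Type*} [Monoid M] {ι : Sort*} (a : ι → M) (m : M) : Prop :=
  (∀ i, LDvd (a i) m) ∧ ∀ w, (∀ i, LDvd (a i) w) → LDvd m w

open Function

section GroupOfFractions

variable {M G : Type*} [Monoid M] [Group G] (θ : M →* G)

theorem exists_eq_mul_inv_of_closure_eq_top (hore : ∀ a b : M, ∃ c d, a * c = b * d)
    (hgen : Subgroup.closure (Set.range θ) = ⊤) (g : G) : ∃ u m, g = θ u * (θ m)⁻¹ := by
  have hg : g ∈ Subgroup.closure (Set.range θ) := hgen ▸ Subgroup.mem_top g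
  induction hg using Subgroup.closure_induction with
  | mem _ h =>
    obtain ⟨u, rfl⟩ := h
    exact ⟨u, 1, by simp⟩
  | one => exact ⟨1, 1, by simp⟩
  | mul _ _ _ _ h₁ h₂ =>
    obtain ⟨u, m, rfl⟩ := h₁
    obtain ⟨u', m', rfl⟩ := h₂
    obtain ⟨c, d, hcd⟩ := hore m u'
    have hswap : (θ m)⁻¹ * θ u' = θ c * (θ d)⁻¹ := by
      rw [inv_mul_eq_iff_eq_mul, ← mul_assoc, ← map_mul, hcd, map_mul, mul_inv_cancel_right]
    refine ⟨u * c, m' * d, ?_⟩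
    calc θ u * (θ m)⁻¹ * (θ u' * (θ m')⁻¹) = θ u * ((θ m)⁻¹ * θ u') * (θ m')⁻¹ := by group
      _ = θ (u * c) * (θ (m' * d))⁻¹ := by rw [hswap, map_mul, map_mul]; group
  | inv _ _ h =>
    obtain ⟨u, m, rfl⟩ := h
    exact ⟨m, u, by group⟩

theorem exists_common_denominator (hfrac : ∀ g : G, ∃ u m, g = θ u * (θ m)⁻¹)
    (hlcm : ∀ (n : ℕ) [NeZero n] (f : Fin n → M), ∃ L, IsRightLcm f L)
    {n : ℕ} [NeZero n] (g : Fin n → G) : ∃ b, ∀ i, ∃ c, g i * θ b = θ c := by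
  choose u m hum using fun i => hfrac (g i)
  obtain ⟨b, hb, -⟩ := hlcm n m
  refine ⟨b, fun i => ?_⟩
  obtain ⟨e, he⟩ := hb i
  exact ⟨u i * e, by rw [hum i, he, map_mul, map_mul]; group⟩

theorem exists_pow_succ_eq_pow {a : M} {n : ℕ} (hn : 0 < n) (ha : a ^ n = 1) (j : ℕ) :
    ∃ i : Fin n, a ^ ((i : ℕ) + 1) = a ^ j := by
  refine ⟨⟨(j + n - 1) % n, Nat.mod_lt _ hn⟩, ?_⟩
  show a ^ ((j + n - 1) % n + 1) = a ^ j
  rw [pow_succ, ← pow_eq_pow_mod _ ha, ← pow_succ, Nat.sub_add_cancel (by omega), pow_add, ha,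
    mul_one]

theorem eq_one_of_pow_eq_one (hθ : Injective θ) (deg : G →* Multiplicative ℤ)
    (hdeg : ∀ m, deg (θ m) = 1 → m = 1) (hfrac : ∀ g : G, ∃ u m, g = θ u * (θ m)⁻¹)
    (hlcm : ∀ (n : ℕ) [NeZero n] (f : Fin n → M), ∃ L, IsRightLcm f L)
    {a : G} {n : ℕ} (hn : 0 < n) (ha : a ^ n = 1) : a = 1 := by
  have : NeZero n := ⟨hn.ne'⟩
  obtain ⟨b, hb⟩ := exists_common_denominator θ hfrac hlcm fun i : Fin n => a ^ (i : ℕ)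
  choose c hc using hb
  obtain ⟨L, hcL, hLmin⟩ := hlcm n c
  choose d hd using hcL
  have hstep : ∀ i : Fin n, a * θ L = a ^ ((i : ℕ) + 1) * θ b * θ (d i) := fun i => by
    rw [hd i, map_mul, ← hc i, pow_succ']
    group
  obtain ⟨A, hA⟩ : ∃ A, θ A = a * θ L := ⟨b * d ⟨n - 1, by omega⟩, by
    rw [hstep, Fin.val_mk, Nat.sub_add_cancel hn, ha, one_mul, map_mul]⟩
  have hcA : ∀ j, LDvd (c j) A := fun j => by
    obtain ⟨i, hij⟩ := exists_pow_succ_eq_pow hn ha j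
    exact ⟨d i, hθ (by rw [hA, hstep i, hij, hc j, map_mul])⟩
  obtain ⟨e, he⟩ := hLmin A hcA
  have hdeg_a : deg a = 1 := (pow_eq_one_iff_left hn.ne').1 (by rw [← map_pow, ha, map_one])
  have he₁ : e = 1 := hdeg e <| by
    have := congrArg deg (hA.symm.trans (congrArg θ he))
    rwa [map_mul, map_mul, map_mul, hdeg_a, one_mul, eq_comm, mul_eq_left] at this
  rwa [he, he₁, mul_one, eq_comm, mul_eq_right] at hA

end GroupOfFractions

section Solution

variable {X : Type*} {S : X × X → X × X}

structure IsInvolutiveSolution (S : X × X → X × X) : Prop where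
  nondegenerate : Nondegenerate S
  involutive : InvolutiveSol S
  braided : BraidedSol S

theorem InvolutiveSol.apply_apply (h : InvolutiveSol S) (p : X × X) : S (S p) = p :=
  congrFun h p

theorem BraidedSol.gmap_gmap (h : BraidedSol S) (x y z : X) :
    gmap S (gmap S x y) (gmap S (fmap S y x) z) = gmap S x (gmap S y z) :=
  (congrArg Prod.fst (congrFun h (x, y, z)) :)

theorem smi_mul_smi (x y : X) :
    smi S x * smi S y = smi S (S (x, y)).1 * smi S (S (x, y)).2 :=
  (Con.eq _).2 (ConGen.Rel.of _ _ ⟨x, y, rfl, rfl⟩)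

theorem of_mul_of (x y : X) :
    (PresentedGroup.of x : StructureGroup S) * PresentedGroup.of y =
      PresentedGroup.of (S (x, y)).1 * PresentedGroup.of (S (x, y)).2 :=
  PresentedGroup.mk_eq_mk_of_mul_inv_mem ⟨x, y, rfl⟩

@[elab_as_elim]
theorem StructureMonoid.induction_on {p : StructureMonoid S → Prop} (m : StructureMonoid S)
    (one : p 1) (smi_mul : ∀ x m, p m → p (smi S x * m)) : p m := by
  obtain ⟨w, rfl⟩ := Con.mk'_surjective m
  exact FreeMonoid.inductionOn' w one fun x w ih => smi_mul x _ ih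

variable (S) in
def toStructureGroup : StructureMonoid S →* StructureGroup S :=
  Con.lift _ (FreeMonoid.lift PresentedGroup.of) <| Con.conGen_le.2 <| by
    rintro _ _ ⟨x, y, rfl, rfl⟩
    simpa only [Con.ker_rel, map_mul, FreeMonoid.lift_eval_of] using of_mul_of x y

theorem toStructureGroup_smi (x : X) : toStructureGroup S (smi S x) = PresentedGroup.of x := by
  rw [smi, toStructureGroup, Con.lift_mk', FreeMonoid.lift_eval_of]

theorem closure_range_toStructureGroup :
    Subgroup.closure (Set.range (toStructureGroup S)) = ⊤ := by
  refine top_le_iff.1 (PresentedGroup.closure_range_of (ybGRels S) ▸ Subgroup.closure_mono ?_)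
  rintro _ ⟨x, rfl⟩
  exact ⟨smi S x, toStructureGroup_smi x⟩

variable (X) in
def permAction : Equiv.Perm X →* MulAut (Multiplicative (X → ℤ)) where
  toFun σ := AddEquiv.toMultiplicative
    { toFun := fun w => w ∘ σ.symm
      invFun := fun w => w ∘ σ
      left_inv := fun w => by ext; simp
      right_inv := fun w => by ext; simp
      map_add' := fun _ _ => rfl }
  map_one' := rfl
  map_mul' _ _ := rfl

variable (X) in
abbrev Env := Multiplicative (X → ℤ) ⋊[permAction X] Equiv.Perm X

variable (X) in
def coordSum [Fintype X] : Env X →* Multiplicative ℤ where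
  toFun p := Multiplicative.ofAdd (∑ c, Multiplicative.toAdd p.left c)
  map_one' := by simp
  map_mul' p q := by
    simp only [SemidirectProduct.mul_left, ← ofAdd_add]
    congr 1
    exact (Finset.sum_add_distrib).trans
      (congrArg _ (Equiv.sum_comp p.right.symm (Multiplicative.toAdd q.left)))

noncomputable def gperm (hnd : Nondegenerate S) (x : X) : Equiv.Perm X :=
  Equiv.ofBijective (gmap S x) (hnd.1 x)

variable [DecidableEq X]

noncomputable def envGen (hnd : Nondegenerate S) (x : X) : Env X :=
  ⟨Multiplicative.ofAdd (Pi.single x 1), gperm hnd x⟩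

variable (hS : IsInvolutiveSolution S)
include hS

theorem envGen_mul_envGen (x y : X) :
    envGen hS.1 x * envGen hS.1 y = envGen hS.1 (S (x, y)).1 * envGen hS.1 (S (x, y)).2 := by
  have hinv : gperm hS.1 (S (x, y)).1 (S (x, y)).2 = x :=
    congrArg Prod.fst (hS.involutive.apply_apply (x, y))
  refine SemidirectProduct.ext ?_ (Equiv.ext fun z => (hS.braided.gmap_gmap x y z).symm)
  show Multiplicative.ofAdd (Pi.single x 1 + Pi.single y 1 ∘ (gperm hS.1 x).symm) =
    Multiplicative.ofAdd (Pi.single _ 1 + Pi.single _ 1 ∘ (gperm hS.1 (S (x, y)).1).symm)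
  rw [Pi.single_comp_equiv, Pi.single_comp_equiv, Equiv.symm_symm, Equiv.symm_symm, hinv,
    add_comm]
  rfl

noncomputable def toEnv : StructureGroup S →* Env X :=
  PresentedGroup.toGroup (f := envGen hS.1) <| by
    rintro _ ⟨x, y, rfl⟩
    simp only [map_mul, map_inv, FreeGroup.lift_apply_of]
    rw [envGen_mul_envGen hS, mul_inv_cancel]

theorem toEnv_toStructureGroup_smi (x : X) :
    toEnv hS (toStructureGroup S (smi S x)) = envGen hS.1 x := by
  rw [toStructureGroup_smi, toEnv, PresentedGroup.toGroup.of]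

noncomputable def coord (m : StructureMonoid S) : X → ℤ :=
  Multiplicative.toAdd (toEnv hS (toStructureGroup S m)).left

noncomputable def perm (m : StructureMonoid S) : Equiv.Perm X :=
  (toEnv hS (toStructureGroup S m)).right

theorem coord_one : coord hS 1 = 0 := by
  simp [coord]

theorem coord_mul (m m' : StructureMonoid S) :
    coord hS (m * m') = coord hS m + coord hS m' ∘ (perm hS m).symm := by
  simp only [coord, perm, map_mul, SemidirectProduct.mul_left]
  rfl

theorem coord_smi (x : X) : coord hS (smi S x) = Pi.single x 1 := by
  rw [coord, toEnv_toStructureGroup_smi]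
  rfl

theorem coord_smi_mul (x : X) (m : StructureMonoid S) :
    coord hS (smi S x * m) = Pi.single x 1 + coord hS m ∘ (gperm hS.1 x).symm := by
  rw [coord_mul, coord_smi, perm, toEnv_toStructureGroup_smi]
  rfl

theorem coord_nonneg (m : StructureMonoid S) : 0 ≤ coord hS m := by
  induction m using StructureMonoid.induction_on with
  | one => rw [coord_one]
  | smi_mul x m ih =>
    rw [coord_smi_mul]
    exact add_nonneg (Pi.single_nonneg.2 zero_le_one) fun c => ih _

theorem coord_le_coord_mul (m e : StructureMonoid S) : coord hS m ≤ coord hS (m * e) := by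
  rw [coord_mul]
  exact le_add_of_nonneg_right fun c => coord_nonneg hS e _

theorem coord_smi_mul_le_iff (x : X) (d m : StructureMonoid S) :
    coord hS (smi S x * d) ≤ coord hS (smi S x * m) ↔ coord hS d ≤ coord hS m := by
  rw [coord_smi_mul, coord_smi_mul, add_le_add_iff_left]
  exact ⟨fun h c => by simpa using h (gperm hS.1 x c), fun h c => h _⟩

theorem ldvd_smi_of_coord_pos {m : StructureMonoid S} {y : X} (h : 0 < coord hS m y) :
    LDvd (smi S y) m := by
  induction m using StructureMonoid.induction_on generalizing y with
  | one => simp [coord_one] at h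
  | smi_mul x m ih =>
    rcases eq_or_ne x y with rfl | hxy
    · exact ⟨m, rfl⟩
    rw [coord_smi_mul, Pi.add_apply, Pi.single_eq_of_ne' hxy, zero_add] at h
    obtain ⟨m', rfl⟩ := ih h
    -- the relation `x · g_x⁻¹(y) = y · f_{g_x⁻¹(y)}(x)` moves `y` to the front
    have hy : (S (x, (gperm hS.1 x).symm y)).1 = y := (gperm hS.1 x).apply_symm_apply y
    refine ⟨smi S (S (x, (gperm hS.1 x).symm y)).2 * m', ?_⟩
    rw [← mul_assoc, smi_mul_smi, hy, mul_assoc]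

theorem ldvd_of_coord_le {d m : StructureMonoid S} (h : coord hS d ≤ coord hS m) : LDvd d m := by
  induction d using StructureMonoid.induction_on generalizing m with
  | one => exact ⟨m, (one_mul m).symm⟩
  | smi_mul x d ih =>
    have hpos : 0 < coord hS m x := by
      refine lt_of_lt_of_le ?_ (h x)
      rw [coord_smi_mul, Pi.add_apply, Pi.single_eq_same, comp_apply]
      linarith [show (0 : ℤ) ≤ _ from coord_nonneg hS d ((gperm hS.1 x).symm x)]
    obtain ⟨m', rfl⟩ := ldvd_smi_of_coord_pos hS hpos
    obtain ⟨e, rfl⟩ := ih ((coord_smi_mul_le_iff hS x d m').1 h)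
    exact ⟨e, (mul_assoc _ _ _).symm⟩

theorem ldvd_iff_coord_le {d m : StructureMonoid S} : LDvd d m ↔ coord hS d ≤ coord hS m :=
  ⟨fun ⟨e, he⟩ => he ▸ coord_le_coord_mul hS d e, ldvd_of_coord_le hS⟩

theorem eq_one_of_coord_eq_zero {m : StructureMonoid S} (h : coord hS m = 0) : m = 1 := by
  induction m using StructureMonoid.induction_on with
  | one => rfl
  | smi_mul x m _ =>
    have := coord_le_coord_mul hS (smi S x) m x
    simp [h, coord_smi] at this

theorem coord_injective : Injective (coord hS) := by
  intro m m' h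
  obtain ⟨e, rfl⟩ := ldvd_of_coord_le hS h.le
  rw [coord_mul, left_eq_add] at h
  have he : coord hS e = 0 := funext fun c => by simpa using congrFun h (perm hS m c)
  rw [eq_one_of_coord_eq_zero hS he, mul_one]

theorem toStructureGroup_injective : Injective (toStructureGroup S) := fun _ _ h =>
  coord_injective hS (congrArg (fun g => Multiplicative.toAdd (toEnv hS g).left) h)

variable [Fintype X]

theorem exists_coord_eq (v : X → ℤ) (hv : 0 ≤ v) : ∃ m, coord hS m = v := by
  obtain ⟨k, hk⟩ : ∃ k : ℕ, ∑ c, v c = k :=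
    ⟨_, (Int.toNat_of_nonneg (Finset.sum_nonneg fun c _ => hv c)).symm⟩
  induction k generalizing v with
  | zero =>
    refine ⟨1, funext fun c => ?_⟩
    rw [coord_one]
    exact ((Finset.sum_eq_zero_iff_of_nonneg fun c _ => hv c).1 hk c (Finset.mem_univ c)).symm
  | succ k ih =>
    obtain ⟨c, hc⟩ : ∃ c, 0 < v c := by
      by_contra! h
      have : ∑ c, v c = 0 := Finset.sum_eq_zero fun c _ => le_antisymm (h c) (hv c)
      omega
    have hv' : 0 ≤ v - Pi.single c 1 := fun c' => by
      rcases eq_or_ne c' c with rfl | hc'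
      · simp only [Pi.zero_apply, Pi.sub_apply, Pi.single_eq_same]
        omega
      · simpa [Pi.single_eq_of_ne hc'] using hv c'
    have hk' : ∑ c', (v - Pi.single c 1 : X → ℤ) c' = k := by
      simp only [Pi.sub_apply, Finset.sum_sub_distrib, Finset.sum_pi_single', Finset.mem_univ,
        if_true, hk]
      push_cast
      ring
    obtain ⟨m, hm⟩ := ih _ hv' hk'
    -- right multiplication by the generator `σ_m⁻¹(c)` raises the `c`-coordinate by one
    refine ⟨m * smi S ((perm hS m).symm c), ?_⟩
    rw [coord_mul, coord_smi, Pi.single_comp_equiv, Equiv.symm_symm, Equiv.apply_symm_apply, hm,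
      sub_add_cancel]

theorem exists_isRightLcm {ι : Type*} [Finite ι] [Nonempty ι] (f : ι → StructureMonoid S) :
    ∃ L, IsRightLcm f L := by
  have hbdd := Finite.bddAbove_range fun i => coord hS (f i)
  obtain ⟨i₀⟩ := ‹Nonempty ι›
  obtain ⟨L, hL⟩ := exists_coord_eq hS (⨆ i, coord hS (f i))
    ((coord_nonneg hS (f i₀)).trans (le_ciSup hbdd i₀))
  refine ⟨L, fun i => (ldvd_iff_coord_le hS).2 ?_, fun w hw => (ldvd_iff_coord_le hS).2 ?_⟩
  · exact hL ▸ le_ciSup hbdd i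
  · exact hL ▸ ciSup_le fun i => (ldvd_iff_coord_le hS).1 (hw i)

theorem exists_eq_mul_inv (g : StructureGroup S) :
    ∃ u m, g = toStructureGroup S u * (toStructureGroup S m)⁻¹ := by
  refine exists_eq_mul_inv_of_closure_eq_top _ (fun a b => ?_) closure_range_toStructureGroup g
  obtain ⟨L, hL, -⟩ := exists_isRightLcm hS ![a, b]
  obtain ⟨c, hc⟩ := hL 0
  obtain ⟨d, hd⟩ := hL 1
  exact ⟨c, d, hc.symm.trans hd⟩

noncomputable def degree : StructureGroup S →* Multiplicative ℤ :=
  (coordSum X).comp (toEnv hS)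

theorem eq_one_of_degree_eq_one {m : StructureMonoid S} (h : degree hS (toStructureGroup S m) = 1) :
    m = 1 := by
  refine eq_one_of_coord_eq_zero hS (funext fun c => ?_)
  exact (Finset.sum_eq_zero_iff_of_nonneg fun c _ => coord_nonneg hS m c).1
    (Multiplicative.ofAdd.injective h) c (Finset.mem_univ c)

end Solution

/-- The structure group of a non-degenerate, involutive and braided solution on a finite
set is torsion-free. -/
theorem stmt5 {X : Type*} [Finite X] (S : X × X → X × X)
    (hnd : Nondegenerate S) (hinv : InvolutiveSol S) (hbr : BraidedSol S) :
    ∀ a : StructureGroup S, ∀ n : ℕ, 0 < n → a ^ n = 1 → a = 1 := by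
  intro a n hn ha
  have := Fintype.ofFinite X
  classical
  have hS : IsInvolutiveSolution S := ⟨hnd, hinv, hbr⟩
  exact eq_one_of_pow_eq_one (toStructureGroup S) (toStructureGroup_injective hS) (degree hS)
    (fun _ => eq_one_of_degree_eq_one hS) (exists_eq_mul_inv hS)
    (fun _ _ f => exists_isRightLcm hS f) hn ha
end YBE
end

section
/- Let (X,S) be a non-degenerate involutive set-theoretical solution on a finite set X. Assume that for all j, k ∈ X, (A) f_j ∘ f_{f_j^{-1}(k)} = f_k ∘ f_{f_k^{-1}(j)}, and that for all i, k ∈ X, (B) g_i ∘ g_{g_i^{-1}(k)} = g_k ∘ g_{g_k^{-1}(i)}. Then for all x, y, z ∈ X the identities g_x ∘ g_y = g_{g_x(y)} ∘ g_{f_y(x)}, f_y ∘ f_x = f_{f_y(x)} ∘ f_{g_x(y)} and f_{g_{f_y(x)}(z)}(g_x(y)) = g_{f_{g_y(z)}(x)}(f_z(y)) hold; that is, (X,S) is braided. -/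
/-!
Substituting `k = g_i(j)` in (B) and using involutivity, which gives `g_{g_i(j)}⁻¹(i) = f_j(i)`,
turns (B) into the first identity; (A) yields the second in the same way. For the third, apply
the injective map `f_r`, `r = f_z(f_y(x))`: by the second identity and involutivity both sides are
sent to `f_z(y)`.
-/

namespace YBE

open Function

section

variable {X : Type*} {S : X × X → X × X}

theorem InvolutiveSol.gmap_gmap_fmap (h : InvolutiveSol S) (x y : X) :
    gmap S (gmap S x y) (fmap S y x) = x :=
  congrArg Prod.fst (congrFun h (x, y))

theorem InvolutiveSol.fmap_fmap_gmap (h : InvolutiveSol S) (x y : X) :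
    fmap S (fmap S y x) (gmap S x y) = y :=
  congrArg Prod.snd (congrFun h (x, y))

theorem InvolutiveSol.fmap_fmap_gmap_eq_gmap_fmap_fmap (h : InvolutiveSol S)
    (hf : ∀ y, Injective (fmap S y))
    (hcomp : ∀ x y : X, fmap S y ∘ fmap S x = fmap S (fmap S y x) ∘ fmap S (gmap S x y))
    (x y z : X) :
    fmap S (gmap S (fmap S y x) z) (gmap S x y)
      = gmap S (fmap S (gmap S y z) x) (fmap S z y) := by
  have hr : fmap S z (fmap S y x) = fmap S (fmap S z y) (fmap S (gmap S y z) x) :=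
    congrFun (hcomp y z) x
  apply hf (fmap S z (fmap S y x))
  calc fmap S (fmap S z (fmap S y x)) (fmap S (gmap S (fmap S y x) z) (gmap S x y))
      = fmap S z (fmap S (fmap S y x) (gmap S x y)) := (congrFun (hcomp _ z) _).symm
    _ = fmap S z y := by rw [h.fmap_fmap_gmap]
    _ = fmap S (fmap S z (fmap S y x)) (gmap S (fmap S (gmap S y z) x) (fmap S z y)) := by
        rw [hr, h.fmap_fmap_gmap]

variable [Nonempty X]

theorem ginv_gmap {x : X} (hg : Injective (gmap S x)) (y : X) : ginv S x (gmap S x y) = y :=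
  leftInverse_invFun hg y

theorem finv_fmap {y : X} (hf : Injective (fmap S y)) (x : X) : finv S y (fmap S y x) = x :=
  leftInverse_invFun hf x

theorem InvolutiveSol.ginv_gmap_fmap (h : InvolutiveSol S) {x y : X}
    (hg : Injective (gmap S (gmap S x y))) : ginv S (gmap S x y) x = fmap S y x := by
  simpa only [h.gmap_gmap_fmap] using ginv_gmap hg (fmap S y x)

theorem InvolutiveSol.finv_fmap_gmap (h : InvolutiveSol S) {x y : X}
    (hf : Injective (fmap S (fmap S y x))) : finv S (fmap S y x) y = gmap S x y := by
  simpa only [h.fmap_fmap_gmap] using finv_fmap hf (gmap S x y)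

theorem InvolutiveSol.gmap_comp_gmap (h : InvolutiveSol S) (hg : ∀ x, Injective (gmap S x))
    (hB : ∀ i k : X, gmap S i ∘ gmap S (ginv S i k) = gmap S k ∘ gmap S (ginv S k i))
    (x y : X) : gmap S x ∘ gmap S y = gmap S (gmap S x y) ∘ gmap S (fmap S y x) := by
  simpa only [ginv_gmap (hg x), h.ginv_gmap_fmap (hg _)] using hB x (gmap S x y)

theorem InvolutiveSol.fmap_comp_fmap (h : InvolutiveSol S) (hf : ∀ y, Injective (fmap S y))
    (hA : ∀ j k : X, fmap S j ∘ fmap S (finv S j k) = fmap S k ∘ fmap S (finv S k j))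
    (x y : X) : fmap S y ∘ fmap S x = fmap S (fmap S y x) ∘ fmap S (gmap S x y) := by
  simpa only [finv_fmap (hf y), h.finv_fmap_gmap (hf _)] using hA y (fmap S y x)

end

theorem stmt13_general {X : Type*} [Nonempty X] (S : X × X → X × X)
    (hnd : Nondegenerate S) (hinv : InvolutiveSol S)
    (hA : ∀ j k : X, fmap S j ∘ fmap S (finv S j k) = fmap S k ∘ fmap S (finv S k j))
    (hB : ∀ i k : X, gmap S i ∘ gmap S (ginv S i k) = gmap S k ∘ gmap S (ginv S k i)) :
    ∀ x y z : X,
      gmap S x ∘ gmap S y = gmap S (gmap S x y) ∘ gmap S (fmap S y x) ∧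
      fmap S y ∘ fmap S x = fmap S (fmap S y x) ∘ fmap S (gmap S x y) ∧
      fmap S (gmap S (fmap S y x) z) (gmap S x y)
        = gmap S (fmap S (gmap S y z) x) (fmap S z y) := by
  have hg : ∀ x, Injective (gmap S x) := fun x => (hnd.1 x).1
  have hf : ∀ y, Injective (fmap S y) := fun y => (hnd.2 y).1
  intro x y z
  exact ⟨hinv.gmap_comp_gmap hg hB x y, hinv.fmap_comp_fmap hf hA x y,
    hinv.fmap_fmap_gmap_eq_gmap_fmap_fmap hf (hinv.fmap_comp_fmap hf hA) x y z⟩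

/-- If a non-degenerate involutive solution satisfies the identities (A) and (B), then it
is braided: the three defining identities of braidedness hold. -/
theorem stmt13 {X : Type*} [Finite X] [Nonempty X] (S : X × X → X × X)
    (hnd : Nondegenerate S) (hinv : InvolutiveSol S)
    (hA : ∀ j k : X, fmap S j ∘ fmap S (finv S j k) = fmap S k ∘ fmap S (finv S k j))
    (hB : ∀ i k : X, gmap S i ∘ gmap S (ginv S i k) = gmap S k ∘ gmap S (ginv S k i)) :
    ∀ x y z : X,
      gmap S x ∘ gmap S y = gmap S (gmap S x y) ∘ gmap S (fmap S y x) ∧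
      fmap S y ∘ fmap S x = fmap S (fmap S y x) ∘ fmap S (gmap S x y) ∧
      fmap S (gmap S (fmap S y x) z) (gmap S x y)
        = gmap S (fmap S (gmap S y z) x) (fmap S z y) :=
  stmt13_general S hnd hinv hA hB
end YBE
end
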